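/- For every fixed 0 < δ < 1 there exist c > 0 and n₀ ∈ ℕ such that for all n ≥ n₀, a random n×n matrix with independent entries uniform on {−1,+1} has rank (over ℝ) at least (1−δ)n with probability at least 1 − 2^{−c·δ²·n²}. -/

import Mathlib

/-!
If a `±1` matrix has rank at most `r`, some `r` of its rows span all the others. Fixing those `r`
rows leaves at most `2^r` choices for each remaining row, because (Odlyzko) a subspace of
dimension `r` contains at most `2^r` sign vectors: `r` suitable coordinates determine each of its
vectors. Summing over the at most `2^n` choices of the spanning rows, at most `2^(n + n² - k²)`
of the `2^(n²)` matrices have rank at most `n - k`, and `k = ⌈δn⌉` makes this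
`2^(-Ω(δ²n²))` of them once `δ²n ≥ 2`.
-/

open scoped Classical

/-- The ±1 matrix associated to a Boolean matrix. -/
def signMatrix (n d : ℕ) (f : Matrix (Fin n) (Fin d) Bool) : Matrix (Fin n) (Fin d) ℝ :=
  fun i j => if f i j then 1 else -1

/-- The probability that a uniformly random `n × d` matrix with independent entries
uniform on `{−1, +1}` satisfies the property `P`. -/
noncomputable def probMatrix (n d : ℕ) (P : Matrix (Fin n) (Fin d) ℝ → Prop) : ℝ :=
  ((Finset.univ.filter fun f : Matrix (Fin n) (Fin d) Bool => P (signMatrix n d f)).card : ℝ)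
    / 2 ^ (n * d)

open Module Submodule Finset

theorem exists_finset_card_le_finrank_span_image_eq {ι K V : Type*} [Finite ι] [DivisionRing K]
    [AddCommGroup V] [Module K V] (v : ι → V) :
    ∃ S : Finset ι, #S ≤ finrank K (span K (Set.range v)) ∧
      span K (v '' S) = span K (Set.range v) := by
  have : Module.Finite K (span K (Set.range v)) := .span_of_finite K (Set.finite_range v)
  obtain ⟨w, hw, hspan, -⟩ := exists_fun_fin_finrank_span_eq K (Set.range v)
  choose g hg using hw
  refine ⟨univ.image g, card_image_le.trans (by simp), le_antisymm (span_mono ?_) ?_⟩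
  · exact Set.image_subset_range _ _
  · refine hspan.symm.le.trans (span_le.2 (Set.range_subset_iff.2 fun j => subset_span ?_))
    exact ⟨g j, by simp, hg j⟩

theorem Submodule.exists_finset_card_le_finrank_eq_of_eqOn {ι K : Type*} [Fintype ι] [Field K]
    (W : Submodule K (ι → K)) :
    ∃ S : Finset ι, #S ≤ finrank K W ∧
      ∀ x ∈ W, ∀ y ∈ W, (∀ i ∈ S, x i = y i) → x = y := by
  let coord (i : ι) : Dual K W := (LinearMap.proj i).comp W.subtype
  obtain ⟨S, hcard, hspan⟩ := exists_finset_card_le_finrank_span_image_eq (K := K) coord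
  refine ⟨S, hcard.trans ((Submodule.finrank_le _).trans Subspace.dual_finrank_eq.le), ?_⟩
  intro x hx y hy hxy
  let z : W := ⟨x - y, W.sub_mem hx hy⟩
  -- Every coordinate functional is a combination of those indexed by `S`, which all vanish at `z`.
  have hz : span K (Set.range coord) ≤ LinearMap.ker (Dual.eval K W z) := by
    rw [← hspan, span_le]
    rintro _ ⟨i, hi, rfl⟩
    simp [coord, z, hxy i hi]
  funext i
  simpa [coord, z, sub_eq_zero] using hz (subset_span ⟨i, rfl⟩)

def signVector {ι : Type*} (b : ι → Bool) : ι → ℝ := fun i => if b i then 1 else -1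

theorem signVector_injective {ι : Type*} : Function.Injective (signVector (ι := ι)) := by
  intro b b' h
  funext i
  have hi := congrFun h i
  simp only [signVector] at hi
  revert hi
  cases b i <;> cases b' i <;> norm_num

theorem card_filter_signVector_mem_le {ι : Type*} [Fintype ι] [DecidableEq ι]
    (W : Submodule ℝ (ι → ℝ)) :
    #{b : ι → Bool | signVector b ∈ W} ≤ 2 ^ finrank ℝ W := by
  obtain ⟨S, hcard, hS⟩ := W.exists_finset_card_le_finrank_eq_of_eqOn
  have hinj : Set.InjOn (fun b : ι → Bool => fun i : S => b i) {b | signVector b ∈ W} := by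
    intro b hb b' hb' hbb'
    refine signVector_injective (hS _ hb _ hb' fun i hi => ?_)
    simp [signVector, congrFun hbb' ⟨i, hi⟩]
  calc #{b : ι → Bool | signVector b ∈ W}
      ≤ Fintype.card (S → Bool) :=
        card_le_card_of_injOn _ (fun _ _ => mem_univ _) (by simpa using hinj)
    _ = 2 ^ #S := by simp
    _ ≤ 2 ^ finrank ℝ W := Nat.pow_le_pow_right two_pos hcard

theorem card_filter_rows_mem_span_le (m d : ℕ) (T : Finset (Fin m)) :
    #{f : Matrix (Fin m) (Fin d) Bool |
        ∀ i ∉ T, signMatrix m d f i ∈ span ℝ (signMatrix m d f '' T)}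
      ≤ 2 ^ (d * #T) * (2 ^ #T) ^ (m - #T) := by
  -- A matrix is recorded by its rows in `T` and its rows outside `T`, each of the latter being
  -- a sign vector in the span of the former.
  let rowSpan (g : T → Fin d → Bool) := span ℝ (Set.range fun i => signVector (g i))
  let completions : Finset (Σ _ : T → Fin d → Bool, {i // i ∉ T} → Fin d → Bool) :=
    univ.sigma fun g => Fintype.piFinset fun _ => {b | signVector b ∈ rowSpan g}
  have hcompletions : #completions ≤ 2 ^ (d * #T) * (2 ^ #T) ^ (m - #T) := by
    have hfiber (g : T → Fin d → Bool) :
        #{b : Fin d → Bool | signVector b ∈ rowSpan g} ≤ 2 ^ #T := by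
      have hrank : finrank ℝ (rowSpan g) ≤ #T :=
        (finrank_range_le_card (R := ℝ) fun i => signVector (g i)).trans (by simp)
      exact (card_filter_signVector_mem_le _).trans (Nat.pow_le_pow_right two_pos hrank)
    calc #completions = ∑ g, #{b : Fin d → Bool | signVector b ∈ rowSpan g} ^ (m - #T) := by
          rw [card_sigma]
          refine sum_congr rfl fun g _ => ?_
          rw [Fintype.card_piFinset, prod_const, card_univ, Fintype.card_subtype_compl,
            Fintype.card_fin, Fintype.card_coe]
      _ ≤ ∑ _g : T → Fin d → Bool, (2 ^ #T) ^ (m - #T) :=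
          sum_le_sum fun g _ => Nat.pow_le_pow_left (hfiber g) _
      _ = 2 ^ (d * #T) * (2 ^ #T) ^ (m - #T) := by simp [pow_mul]
  refine (card_le_card_of_injOn (fun f => ⟨fun i => f i, fun i => f i⟩) ?_ ?_).trans
    hcompletions
  · intro f hf
    refine mem_sigma.2 ⟨mem_univ _, Fintype.mem_piFinset.2 fun i => ?_⟩
    refine mem_filter.2 ⟨mem_univ _, ?_⟩
    have hi := (mem_filter.1 hf).2 i i.2
    rwa [Set.image_eq_range (f := signMatrix m d f)] at hi
  · intro f _ f' _ h
    simp only [Sigma.mk.injEq, heq_eq_eq] at h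
    funext i
    by_cases hi : i ∈ T
    · exact congrFun h.1 ⟨i, hi⟩
    · exact congrFun h.2 ⟨i, hi⟩

theorem card_filter_rank_le_le (m d r : ℕ) (hr : r ≤ m) :
    #{f : Matrix (Fin m) (Fin d) Bool | (signMatrix m d f).rank ≤ r}
      ≤ 2 ^ m * (2 ^ (d * r) * (2 ^ r) ^ (m - r)) := by
  have hcover : ({f : Matrix (Fin m) (Fin d) Bool | (signMatrix m d f).rank ≤ r} : Finset _) ⊆
      (powersetCard r univ).biUnion fun T => {f : Matrix (Fin m) (Fin d) Bool |
        ∀ i ∉ T, signMatrix m d f i ∈ span ℝ (signMatrix m d f '' T)} := by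
    intro f hf
    set M := signMatrix m d f
    obtain ⟨S, hScard, hSspan⟩ := exists_finset_card_le_finrank_span_image_eq (K := ℝ) M.row
    rw [← M.rank_eq_finrank_span_row] at hScard
    obtain ⟨T, hST, -, hTcard⟩ :=
      exists_subsuperset_card_eq (subset_univ S) (hScard.trans (mem_filter.1 hf).2) (by simpa)
    refine mem_biUnion.2 ⟨T, mem_powersetCard.2 ⟨subset_univ T, hTcard⟩,
      mem_filter.2 ⟨mem_univ _, fun i _ => ?_⟩⟩
    have hrow : M.row i ∈ span ℝ (M.row '' S) := hSspan ▸ subset_span ⟨i, rfl⟩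
    exact span_mono (Set.image_mono (coe_subset.2 hST)) hrow
  calc _ ≤ _ := card_le_card hcover
    _ ≤ ∑ T ∈ powersetCard r univ, 2 ^ (d * r) * (2 ^ r) ^ (m - r) := by
        refine card_biUnion_le.trans (sum_le_sum fun T hT => ?_)
        rw [← (mem_powersetCard.1 hT).2]
        exact card_filter_rows_mem_span_le m d T
    _ ≤ 2 ^ m * (2 ^ (d * r) * (2 ^ r) ^ (m - r)) := by
        rw [sum_const, card_powersetCard, card_univ, Fintype.card_fin, smul_eq_mul]
        exact Nat.mul_le_mul_right _ (Nat.choose_le_two_pow m r)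

theorem card_filter_rank_le_sub_mul_le (n k : ℕ) (hk : k ≤ n) :
    #{f : Matrix (Fin n) (Fin n) Bool | (signMatrix n n f).rank ≤ n - k} * 2 ^ (k * k)
      ≤ 2 ^ (n + n * n) := by
  obtain ⟨r, rfl⟩ := Nat.exists_eq_add_of_le hk
  have hcount := card_filter_rank_le_le (k + r) (k + r) r (Nat.le_add_left r k)
  rw [Nat.add_sub_cancel] at hcount
  rw [Nat.add_sub_cancel_left]
  calc _ ≤ 2 ^ (k + r) * (2 ^ ((k + r) * r) * (2 ^ r) ^ k) * 2 ^ (k * k) :=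
        Nat.mul_le_mul_right _ hcount
    _ = 2 ^ (k + r + (k + r) * (k + r)) := by
        rw [← pow_mul, ← pow_add, ← pow_add, ← pow_add]; ring_nf

theorem probMatrix_mono {n d : ℕ} {P Q : Matrix (Fin n) (Fin d) ℝ → Prop}
    (h : ∀ M, P M → Q M) : probMatrix n d P ≤ probMatrix n d Q := by
  unfold probMatrix
  gcongr
  exact h _

theorem probMatrix_not (n d : ℕ) (P : Matrix (Fin n) (Fin d) ℝ → Prop) :
    probMatrix n d (fun M => ¬ P M) = 1 - probMatrix n d P := by
  have hcard : Fintype.card (Matrix (Fin n) (Fin d) Bool) = 2 ^ (n * d) := by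
    rw [Fintype.card_eq_nat_card, Matrix, Nat.card_fun, Nat.card_fun]
    simp [← pow_mul, mul_comm]
  have htotal : #{f : Matrix (Fin n) (Fin d) Bool | ¬ P (signMatrix n d f)}
      + #{f : Matrix (Fin n) (Fin d) Bool | P (signMatrix n d f)} = 2 ^ (n * d) := by
    rw [add_comm, card_filter_add_card_filter_not, card_univ, hcard]
  unfold probMatrix
  rw [eq_sub_iff_add_eq, ← add_div, div_eq_one_iff_eq (by positivity)]
  norm_cast
  convert htotal

theorem probMatrix_rank_le_sub_le (n k : ℕ) (hk : k ≤ n) :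
    probMatrix n n (fun M => M.rank ≤ n - k) ≤ 2 ^ n / 2 ^ (k * k) := by
  unfold probMatrix
  rw [div_le_div_iff₀ (by positivity) (by positivity), ← pow_add]
  norm_cast
  convert card_filter_rank_le_sub_mul_le n k hk

/-- For fixed `0 < δ < 1`, a random `n × n` `±1` matrix has rank at least `(1−δ)n` over
`ℝ` with probability at least `1 − 2^{−c δ² n²}`. -/
theorem rank_large_whp (δ : ℝ) (hδ0 : 0 < δ) (hδ1 : δ < 1) :
    ∃ c : ℝ, 0 < c ∧ ∃ n₀ : ℕ, ∀ n : ℕ, n₀ ≤ n →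
      1 - (2 : ℝ) ^ (-(c * δ ^ 2 * (n : ℝ) ^ 2)) ≤
        probMatrix n n (fun M => (1 - δ) * (n : ℝ) ≤ (M.rank : ℝ)) := by
  refine ⟨1 / 2, one_half_pos, ⌈2 / δ ^ 2⌉₊, fun n hn => ?_⟩
  have hδn : 2 ≤ δ ^ 2 * n := (div_le_iff₀' (by positivity)).1 (Nat.ceil_le.1 hn)
  set k := ⌈δ * n⌉₊
  have hδk : δ * n ≤ k := Nat.le_ceil _
  have hkn : k ≤ n := Nat.ceil_le.2 (mul_le_of_le_one_left n.cast_nonneg hδ1.le)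
  have hdeficient (M : Matrix (Fin n) (Fin n) ℝ) (hM : ¬ (1 - δ) * n ≤ M.rank) :
      M.rank ≤ n - k := by
    have hk1 := Nat.ceil_lt_add_one (by positivity : 0 ≤ δ * n)
    have : M.rank + k < n + 1 := by exact_mod_cast (by linarith : (M.rank + k : ℝ) < n + 1)
    omega
  have hexp : (2 : ℝ) ^ n / 2 ^ (k * k) ≤ 2 ^ (-(1 / 2 * δ ^ 2 * (n : ℝ) ^ 2)) := by
    rw [← Real.rpow_natCast, ← Real.rpow_natCast, ← Real.rpow_sub two_pos]
    refine Real.rpow_le_rpow_of_exponent_le one_le_two ?_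
    push_cast
    nlinarith [mul_le_mul hδk hδk (by positivity) k.cast_nonneg]
  rw [← sub_sub_cancel 1 (probMatrix _ _ _), ← probMatrix_not]
  gcongr 1 - ?_
  exact (probMatrix_mono hdeficient).trans ((probMatrix_rank_le_sub_le n k hkn).trans hexp)
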